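/- arXiv:1912.10523 — 7 statements merged into one kernel-verified Lean document; each statement's English description precedes it below -/
import Mathlib

section
/- Let n, p be positive integers, let x, v ∈ ℝⁿ, let y¹, …, yᵖ ∈ ℝⁿ, and let f : ℝⁿ → ℝ be the quadratic function f(y) = a + bᵀ(y − x) + ½ (y − x)ᵀ C (y − x), where a ∈ ℝ, b ∈ ℝⁿ, and C is a symmetric n×n real matrix. Set w = C v. Let Hᵖʳᵉᵛ be a symmetric n×n real matrix, and suppose H* is a symmetric n×n real matrix that satisfies the enriched interpolating conditions (f(x) + bᵀ(yˡ − x) + ½ (yˡ − x)ᵀ H* (yˡ − x) = f(yˡ) for ℓ = 1, …, p, and H* v = w) and minimizes the Frobenius norm ‖H − Hᵖʳᵉᵛ‖_F among all symmetric n×n matrices H satisfying those conditions. Then ‖H* − C‖_F ≤ ‖Hᵖʳᵉᵛ − C‖_F. -/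
open scoped Matrix

/-- Frobenius norm of a square real matrix. -/
noncomputable def frobNorm {n : ℕ} (A : Matrix (Fin n) (Fin n) ℝ) : ℝ :=
  Real.sqrt (∑ i, ∑ j, (A i j) ^ 2)

private lemma frobQ_nonneg {n : ℕ} (A : Matrix (Fin n) (Fin n) ℝ) :
    0 ≤ ∑ i, ∑ j, (A i j) ^ 2 :=
  Finset.sum_nonneg fun _ _ => Finset.sum_nonneg fun _ _ => sq_nonneg _

private lemma quad_nonneg_imp (aa bb : ℝ) (ha : 0 ≤ aa)
    (h : ∀ t : ℝ, 0 ≤ aa * t ^ 2 + 2 * t * bb) : bb = 0 := by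
  by_contra hb
  rcases eq_or_lt_of_le ha with ha0 | ha0
  · have h1 := h (-bb)
    rw [← ha0] at h1
    have hb2 : 0 < bb ^ 2 := by positivity
    nlinarith
  · have h1 := h (-bb / aa)
    have h2 : aa * (-bb / aa) ^ 2 + 2 * (-bb / aa) * bb = -(bb ^ 2 / aa) := by
      field_simp; ring
    rw [h2] at h1
    have hb2 : 0 < bb ^ 2 := by positivity
    have := div_pos hb2 ha0
    linarith

/-- Theorem 2.1 of the paper: in the quadratic case, the Frobenius-norm least-change
Hessian recovery does not increase the Frobenius-norm error to the true Hessian. -/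
theorem hessian_recovery_error_decrease
    {n p : ℕ} (hn : 0 < n) (hp : 0 < p)
    (x v : Fin n → ℝ) (y : Fin p → Fin n → ℝ)
    (a : ℝ) (b : Fin n → ℝ)
    (C : Matrix (Fin n) (Fin n) ℝ) (hC : C.IsSymm)
    (f : (Fin n → ℝ) → ℝ)
    (hf : ∀ u, f u = a + b ⬝ᵥ (u - x) + (1 / 2) * ((u - x) ⬝ᵥ C.mulVec (u - x)))
    (w : Fin n → ℝ) (hw : w = C.mulVec v)
    (Hprev Hstar : Matrix (Fin n) (Fin n) ℝ)
    (hHprev : Hprev.IsSymm) (hHstar : Hstar.IsSymm)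
    (hfeas : ∀ ℓ : Fin p,
      f x + b ⬝ᵥ (y ℓ - x) + (1 / 2) * ((y ℓ - x) ⬝ᵥ Hstar.mulVec (y ℓ - x)) = f (y ℓ))
    (hfeasv : Hstar.mulVec v = w)
    (hmin : ∀ H : Matrix (Fin n) (Fin n) ℝ, H.IsSymm →
      (∀ ℓ : Fin p,
        f x + b ⬝ᵥ (y ℓ - x) + (1 / 2) * ((y ℓ - x) ⬝ᵥ H.mulVec (y ℓ - x)) = f (y ℓ)) →
      H.mulVec v = w →
      frobNorm (Hstar - Hprev) ≤ frobNorm (H - Hprev)) :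
    frobNorm (Hstar - C) ≤ frobNorm (Hprev - C) := by
  classical
  set E : Matrix (Fin n) (Fin n) ℝ := Hstar - Hprev with hE
  set D : Matrix (Fin n) (Fin n) ℝ := C - Hstar with hD
  -- quadratic forms of Hstar and C agree at the sample directions
  have hquad : ∀ ℓ : Fin p,
      (y ℓ - x) ⬝ᵥ Hstar.mulVec (y ℓ - x) = (y ℓ - x) ⬝ᵥ C.mulVec (y ℓ - x) := by
    intro ℓ
    have h1 := hfeas ℓ
    have h2 := hf (y ℓ)
    have h3 := hf x
    simp only [sub_self] at h3
    have hx0 : f x = a := by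
      simpa [Matrix.mulVec_zero, dotProduct_zero] using h3
    rw [h2, hx0] at h1
    linarith
  -- each Hstar + t • D is feasible
  have hfeasT : ∀ t : ℝ, ∀ ℓ : Fin p,
      f x + b ⬝ᵥ (y ℓ - x) + (1 / 2) *
        ((y ℓ - x) ⬝ᵥ (Hstar + t • D).mulVec (y ℓ - x)) = f (y ℓ) := by
    intro t ℓ
    have h1 := hfeas ℓ
    have hq : (y ℓ - x) ⬝ᵥ (Hstar + t • D).mulVec (y ℓ - x)
        = (y ℓ - x) ⬝ᵥ Hstar.mulVec (y ℓ - x) := by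
      simp only [hD, Matrix.add_mulVec, Matrix.smul_mulVec, Matrix.sub_mulVec,
        dotProduct_add, dotProduct_smul, dotProduct_sub, smul_eq_mul,
        hquad ℓ]
      ring
    rw [hq]; exact h1
  have hsymT : ∀ t : ℝ, (Hstar + t • D).IsSymm := by
    intro t
    exact hHstar.add ((hC.sub hHstar).smul t)
  have hvT : ∀ t : ℝ, (Hstar + t • D).mulVec v = w := by
    intro t
    simp only [hD, Matrix.add_mulVec, Matrix.smul_mulVec, Matrix.sub_mulVec,
      hfeasv, ← hw, sub_self, smul_zero, add_zero]
  -- expansion of the squared norm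
  have expand : ∀ t : ℝ,
      (∑ i, ∑ j, ((E + t • D) i j) ^ 2)
        = ((∑ i, ∑ j, (E i j) ^ 2) + (∑ i, ∑ j, (D i j) ^ 2) * t ^ 2)
            + 2 * t * (∑ i, ∑ j, E i j * D i j) := by
    intro t
    rw [Finset.sum_mul, Finset.mul_sum, ← Finset.sum_add_distrib, ← Finset.sum_add_distrib]
    refine Finset.sum_congr rfl fun i _ => ?_
    rw [Finset.sum_mul, Finset.mul_sum, ← Finset.sum_add_distrib, ← Finset.sum_add_distrib]
    refine Finset.sum_congr rfl fun j _ => ?_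
    simp only [Matrix.add_apply, Matrix.smul_apply, smul_eq_mul]
    ring
  -- from minimality: the cross term vanishes
  have hcross : (∑ i, ∑ j, E i j * D i j) = 0 := by
    apply quad_nonneg_imp _ _ (frobQ_nonneg D)
    intro t
    have hm := hmin (Hstar + t • D) (hsymT t) (hfeasT t) (hvT t)
    have harr : Hstar + t • D - Hprev = E + t • D := by
      rw [hE]; abel
    rw [harr] at hm
    unfold frobNorm at hm
    have hle : (∑ i, ∑ j, (E i j) ^ 2) ≤ ∑ i, ∑ j, ((E + t • D) i j) ^ 2 := by
      have h1 := frobQ_nonneg E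
      have h2 := frobQ_nonneg (E + t • D)
      nlinarith [Real.sq_sqrt h1, Real.sq_sqrt h2, Real.sqrt_nonneg (∑ i, ∑ j, (E i j) ^ 2),
        Real.sqrt_nonneg (∑ i, ∑ j, ((E + t • D) i j) ^ 2)]
    rw [expand t] at hle
    linarith
  -- conclude
  have hfinal : (∑ i, ∑ j, ((Hstar - C) i j) ^ 2) ≤ ∑ i, ∑ j, ((Hprev - C) i j) ^ 2 := by
    have e1 : E + (1 : ℝ) • D = E + D := by rw [one_smul]
    have h1 : Hprev - C = -(E + D) := by rw [hE, hD]; abel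
    have h2 : Hstar - C = -D := by rw [hD]; abel
    have h3 : (∑ i, ∑ j, ((Hprev - C) i j) ^ 2) = ∑ i, ∑ j, ((E + D) i j) ^ 2 := by
      rw [h1]
      refine Finset.sum_congr rfl fun i _ => Finset.sum_congr rfl fun j _ => ?_
      simp only [Matrix.neg_apply, Matrix.add_apply]
      ring
    have h4 : (∑ i, ∑ j, ((Hstar - C) i j) ^ 2) = ∑ i, ∑ j, (D i j) ^ 2 := by
      rw [h2]
      refine Finset.sum_congr rfl fun i _ => Finset.sum_congr rfl fun j _ => ?_
      simp only [Matrix.neg_apply]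
      ring
    rw [h3, h4, ← e1, expand 1, hcross]
    have := frobQ_nonneg E
    nlinarith
  exact Real.sqrt_le_sqrt hfinal
end

section
/- Let n, p be positive integers, let x, v ∈ ℝⁿ, let y¹, …, yᵖ ∈ ℝⁿ, and let f : ℝⁿ → ℝ be the quadratic function f(y) = a + bᵀ(y − x) + ½ (y − x)ᵀ C (y − x), where a ∈ ℝ, b ∈ ℝⁿ, and C is a symmetric n×n real matrix. Set w = C v. Let Hᵖʳᵉᵛ be a symmetric n×n real matrix, and suppose H* is a symmetric n×n real matrix that satisfies the enriched interpolating conditions (f(x) + bᵀ(yˡ − x) + ½ (yˡ − x)ᵀ H* (yˡ − x) = f(yˡ) for ℓ = 1, …, p, and H* v = w) and minimizes the Frobenius norm ‖H − Hᵖʳᵉᵛ‖_F among all symmetric n×n matrices H satisfying those conditions. Then ‖H* − C‖²_F = ‖Hᵖʳᵉᵛ − C‖²_F − ‖H* − Hᵖʳᵉᵛ‖²_F. -/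
open scoped Matrix

lemma frobNorm_sq {n : ℕ} (A : Matrix (Fin n) (Fin n) ℝ) :
    frobNorm A ^ 2 = ∑ i, ∑ j, (A i j) ^ 2 := by
  refine Real.sq_sqrt ?_
  exact Finset.sum_nonneg fun i _ => Finset.sum_nonneg fun j _ => sq_nonneg _

/-- Theorem 2.1 of the paper: in the quadratic case, the Frobenius-norm least-change
Hessian recovery does not increase the Frobenius-norm error to the true Hessian. -/
theorem hessian_recovery_pythagoras
    {n p : ℕ} (hn : 0 < n) (hp : 0 < p)
    (x v : Fin n → ℝ) (y : Fin p → Fin n → ℝ)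
    (a : ℝ) (b : Fin n → ℝ)
    (C : Matrix (Fin n) (Fin n) ℝ) (hC : C.IsSymm)
    (f : (Fin n → ℝ) → ℝ)
    (hf : ∀ u, f u = a + b ⬝ᵥ (u - x) + (1 / 2) * ((u - x) ⬝ᵥ C.mulVec (u - x)))
    (w : Fin n → ℝ) (hw : w = C.mulVec v)
    (Hprev Hstar : Matrix (Fin n) (Fin n) ℝ)
    (hHprev : Hprev.IsSymm) (hHstar : Hstar.IsSymm)
    (hfeas : ∀ ℓ : Fin p,
      f x + b ⬝ᵥ (y ℓ - x) + (1 / 2) * ((y ℓ - x) ⬝ᵥ Hstar.mulVec (y ℓ - x)) = f (y ℓ))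
    (hfeasv : Hstar.mulVec v = w)
    (hmin : ∀ H : Matrix (Fin n) (Fin n) ℝ, H.IsSymm →
      (∀ ℓ : Fin p,
        f x + b ⬝ᵥ (y ℓ - x) + (1 / 2) * ((y ℓ - x) ⬝ᵥ H.mulVec (y ℓ - x)) = f (y ℓ)) →
      H.mulVec v = w →
      frobNorm (Hstar - Hprev) ≤ frobNorm (H - Hprev)) :
    frobNorm (Hstar - C) ^ 2 = frobNorm (Hprev - C) ^ 2 - frobNorm (Hstar - Hprev) ^ 2 := by
  have hfx : f x = a := by simp [hf]
  -- quadratic forms of C and Hstar agree at each sample displacement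
  have hquad : ∀ ℓ : Fin p,
      (y ℓ - x) ⬝ᵥ Hstar.mulVec (y ℓ - x) = (y ℓ - x) ⬝ᵥ C.mulVec (y ℓ - x) := by
    intro ℓ
    have h1 := hfeas ℓ
    have h2 := hf (y ℓ)
    rw [h2, hfx] at h1
    linarith
  set A : Matrix (Fin n) (Fin n) ℝ := Hstar - Hprev with hA
  set D : Matrix (Fin n) (Fin n) ℝ := C - Hstar with hD
  set S : Matrix (Fin n) (Fin n) ℝ → ℝ := fun M => ∑ i, ∑ j, (M i j) ^ 2 with hS
  set ip : ℝ := ∑ i, ∑ j, A i j * D i j with hip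
  -- for each t, Hstar + t • D is feasible
  have key : ∀ t : ℝ, S A ≤ S (A + t • D) := by
    intro t
    have hsymm : (Hstar + t • D).IsSymm := by
      simp [Matrix.IsSymm, Matrix.transpose_add, Matrix.transpose_smul,
        Matrix.transpose_sub, hC.eq, hHstar.eq, hD]
    have hintp : ∀ ℓ : Fin p,
        f x + b ⬝ᵥ (y ℓ - x) +
          (1 / 2) * ((y ℓ - x) ⬝ᵥ (Hstar + t • D).mulVec (y ℓ - x)) = f (y ℓ) := by
      intro ℓ
      have : (y ℓ - x) ⬝ᵥ (Hstar + t • D).mulVec (y ℓ - x)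
          = (y ℓ - x) ⬝ᵥ Hstar.mulVec (y ℓ - x) := by
        have hDq : (y ℓ - x) ⬝ᵥ D.mulVec (y ℓ - x) = 0 := by
          simp only [hD, Matrix.sub_mulVec, dotProduct_sub, hquad ℓ, sub_self]
        simp [Matrix.add_mulVec, Matrix.smul_mulVec, dotProduct_add,
          dotProduct_smul, hDq]
      rw [this]; exact hfeas ℓ
    have hvcond : (Hstar + t • D).mulVec v = w := by
      have : D.mulVec v = 0 := by
        simp [hD, Matrix.sub_mulVec, hfeasv, hw]
      simp [Matrix.add_mulVec, Matrix.smul_mulVec, this, hfeasv]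
    have := hmin (Hstar + t • D) hsymm hintp hvcond
    have hrw : Hstar + t • D - Hprev = A + t • D := by
      simp [hA]; abel
    rw [hrw] at this
    have h0 : (0:ℝ) ≤ frobNorm (A + t • D) := Real.sqrt_nonneg _
    show (∑ i, ∑ j, (A i j) ^ 2) ≤ ∑ i, ∑ j, ((A + t • D) i j) ^ 2
    rw [← frobNorm_sq A, ← frobNorm_sq (A + t • D)]
    exact pow_le_pow_left₀ (Real.sqrt_nonneg _) this 2
  -- expand S (A + t • D)
  have expand : ∀ t : ℝ, S (A + t • D) = S D * (t * t) + (2 * ip) * t + S A := by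
    intro t
    simp only [hS, hip, Matrix.add_apply, Matrix.smul_apply, smul_eq_mul,
      Finset.mul_sum, Finset.sum_mul, ← Finset.sum_add_distrib]
    refine Finset.sum_congr rfl fun i _ => Finset.sum_congr rfl fun j _ => by ring
  have hdisc : ip = 0 := by
    have h : ∀ t : ℝ, 0 ≤ S D * (t * t) + (2 * ip) * t + 0 := by
      intro t
      have := key t
      rw [expand t] at this
      linarith
    have := discrim_le_zero h
    rw [discrim] at this
    nlinarith [sq_nonneg ip]
  -- Pythagoras
  have hSD : S (A + (1:ℝ) • D) = S D + S A := by
    rw [expand 1]; rw [hdisc]; ring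
  have hrw1 : Hstar - C = -D := by simp [hD]
  have hrw2 : Hprev - C = -(A + (1:ℝ) • D) := by simp [hA, hD]
  rw [hrw1, hrw2, frobNorm_sq, frobNorm_sq, frobNorm_sq]
  have hneg : ∀ M : Matrix (Fin n) (Fin n) ℝ, (∑ i, ∑ j, ((-M) i j)^2) = S M := by
    intro M; simp [hS]
  rw [hneg, hneg]
  show S D = S (A + (1:ℝ) • D) - S A
  rw [hSD]; ring
end

section
/- Let f : ℝⁿ → ℝ be twice continuously differentiable with Hessian Lipschitz continuous with constant L (in operator norm). Let x, v ∈ ℝⁿ, let y¹, …, yᵖ ∈ ℝⁿ, and set Δ_y = max_{1 ≤ ℓ ≤ p} ‖yˡ − x‖, assumed positive. Define the scaled constraint map Φ̂ from symmetric n×n matrices A to ℝᵖ × ℝⁿ by Φ̂(A) = ( ( (1/(2Δ_y²)) (yˡ − x)ᵀ A (yˡ − x) )_{ℓ=1,…,p} , A v ), and suppose there is a constant K ≥ 0 such that ‖A‖_F ≤ K ‖Φ̂(A)‖ for every symmetric n×n matrix A, where the norm on ℝᵖ × ℝⁿ is the Euclidean norm. If the symmetric matrix H satisfies the enriched interpolating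 conditions f(x) + ∇f(x)ᵀ(yˡ − x) + ½ (yˡ − x)ᵀ H (yˡ − x) = f(yˡ) for ℓ = 1, …, p, together with H v = ∇²f(x) v, then ‖H − ∇²f(x)‖_F ≤ K · √p · (L/6) · Δ_y. -/
/-!
Write `E = H - ∇²f(x)`. It is symmetric, because Hessians are (Schwarz), and `E v = 0`.
For `d = yˡ - x`, subtracting the second-order Taylor expansion of `f` at `x`, whose remainder is
at most `(L/6)‖d‖³` for an `L`-Lipschitz Hessian, from the interpolation condition gives
`|dᵀ E d| ≤ (L/3)Δ_y³`. Hence every entry of `Φ̂(E)` is at most `(L/6)Δ_y` in absolute value,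
`‖Φ̂(E)‖ ≤ √p (L/6) Δ_y`, and the conditioning bound `‖E‖_F ≤ K ‖Φ̂(E)‖` concludes.
-/

open scoped Matrix RealInnerProductSpace

section Taylor

variable {F : Type*} [NormedAddCommGroup F] [NormedSpace ℝ F]

theorem norm_le_div_of_norm_deriv_le_pow {φ φ' : ℝ → F} {C : ℝ} (k : ℕ)
    (hφ : ∀ t ∈ Set.Icc (0 : ℝ) 1, HasDerivAt φ (φ' t) t) (h0 : φ 0 = 0)
    (bound : ∀ t ∈ Set.Ico (0 : ℝ) 1, ‖φ' t‖ ≤ C * t ^ k) : ‖φ 1‖ ≤ C / (k + 1) := by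
  have hB (t : ℝ) : HasDerivAt (fun t => C / (k + 1) * t ^ (k + 1)) (C * t ^ k) t := by
    refine ((hasDerivAt_pow (k + 1) t).const_mul (C / (k + 1))).congr_deriv ?_
    rw [Nat.add_sub_cancel]
    push_cast
    field_simp
  simpa using image_norm_le_of_norm_deriv_right_le_deriv_boundary
    (fun t ht => (hφ t ht).continuousAt.continuousWithinAt)
    (fun t ht => (hφ t (Set.Ico_subset_Icc_self ht)).hasDerivWithinAt) (by simp [h0]) hB bound
    (Set.right_mem_Icc.2 zero_le_one)

theorem hasDerivAt_add_smul (x d : F) (t : ℝ) : HasDerivAt (fun t : ℝ => x + t • d) d t := by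
  simpa using ((hasDerivAt_id t).smul_const d).const_add x

variable {E : Type*} [NormedAddCommGroup E] [NormedSpace ℝ E]

theorem norm_sub_sub_fderiv_le_of_lipschitz {g : E → F} {D : E → E →L[ℝ] F} {L : ℝ} {x : E}
    (hD : ∀ u, HasFDerivAt g (D u) u) (hLip : ∀ u, ‖D u - D x‖ ≤ L * ‖u - x‖) (d : E) :
    ‖g (x + d) - g x - D x d‖ ≤ L / 2 * ‖d‖ ^ 2 := by
  have hderiv (t : ℝ) : HasDerivAt (fun t : ℝ => g (x + t • d) - g x - t • D x d)
      (D (x + t • d) d - D x d) t := by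
    have := (((hD _).comp_hasDerivAt t (hasDerivAt_add_smul x d t)).sub_const (g x)).sub
      ((hasDerivAt_id t).smul_const (D x d))
    simp only [one_smul] at this
    exact this
  have bound : ∀ t ∈ Set.Ico (0 : ℝ) 1, ‖D (x + t • d) d - D x d‖ ≤ L * ‖d‖ ^ 2 * t ^ 1 := by
    intro t ht
    calc ‖D (x + t • d) d - D x d‖ ≤ ‖D (x + t • d) - D x‖ * ‖d‖ :=
          (D (x + t • d) - D x).le_opNorm d
      _ ≤ L * ‖t • d‖ * ‖d‖ := by
          gcongr
          simpa using hLip (x + t • d)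
      _ = L * ‖d‖ ^ 2 * t ^ 1 := by
          rw [norm_smul, Real.norm_of_nonneg ht.1]
          ring
  have := norm_le_div_of_norm_deriv_le_pow 1 (fun t _ => hderiv t) (by simp) bound
  simp only [one_smul] at this
  linarith

end Taylor

section Gradient

variable {E : Type*} [NormedAddCommGroup E] [InnerProductSpace ℝ E] [CompleteSpace E]

theorem abs_sub_taylor_two_le_of_lipschitz {f : E → ℝ} {g : E → E} {D : E → E →L[ℝ] E} {L : ℝ}
    {x : E} (hg : ∀ u, HasGradientAt f (g u) u) (hD : ∀ u, HasFDerivAt g (D u) u)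
    (hLip : ∀ u, ‖D u - D x‖ ≤ L * ‖u - x‖) (d : E) :
    |f (x + d) - f x - ⟪g x, d⟫ - 1 / 2 * ⟪d, D x d⟫| ≤ L / 6 * ‖d‖ ^ 3 := by
  have hderiv (t : ℝ) : HasDerivAt
      (fun t : ℝ => f (x + t • d) - f x - t * ⟪g x, d⟫ - t ^ 2 / 2 * ⟪d, D x d⟫)
      ⟪g (x + t • d) - g x - D x (t • d), d⟫ t := by
    have h1 : HasDerivAt (fun t => f (x + t • d)) ⟪g (x + t • d), d⟫ t :=
      (hg _).hasFDerivAt.comp_hasDerivAt t (hasDerivAt_add_smul x d t)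
    refine (((h1.sub_const (f x)).sub ((hasDerivAt_id t).mul_const ⟪g x, d⟫)).sub
      (((hasDerivAt_pow 2 t).div_const 2).mul_const ⟪d, D x d⟫)).congr_deriv ?_
    rw [inner_sub_left, inner_sub_left, map_smul, real_inner_smul_left, real_inner_comm d (D x d)]
    ring
  have bound : ∀ t ∈ Set.Ico (0 : ℝ) 1,
      ‖⟪g (x + t • d) - g x - D x (t • d), d⟫‖ ≤ L / 2 * ‖d‖ ^ 3 * t ^ 2 := by
    intro t ht
    calc _ ≤ ‖g (x + t • d) - g x - D x (t • d)‖ * ‖d‖ := norm_inner_le_norm _ _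
      _ ≤ L / 2 * ‖t • d‖ ^ 2 * ‖d‖ := by
          gcongr
          exact norm_sub_sub_fderiv_le_of_lipschitz hD hLip _
      _ = L / 2 * ‖d‖ ^ 3 * t ^ 2 := by
          rw [norm_smul, Real.norm_of_nonneg ht.1]
          ring
  have := norm_le_div_of_norm_deriv_le_pow 2 (fun t _ => hderiv t) (by simp) bound
  simp only [one_smul, one_mul, one_pow, Real.norm_eq_abs] at this
  refine this.trans_eq ?_
  push_cast
  ring

theorem isSymmetric_of_hasFDerivAt_gradient {f : E → ℝ} {g : E → E} {D : E →L[ℝ] E} {x : E}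
    (hg : ∀ᶠ u in nhds x, HasGradientAt f (g u) u) (hD : HasFDerivAt g D x) :
    (D : E →ₗ[ℝ] E).IsSymmetric := by
  intro v w
  have := second_derivative_symmetric_of_eventually (f' := fun u => innerSL ℝ (g u))
    (hg.mono fun u hu => hu.hasFDerivAt) ((innerSL ℝ).hasFDerivAt.comp x hD) v w
  rw [ContinuousLinearMap.comp_apply, ContinuousLinearMap.comp_apply, innerSL_apply_apply,
    innerSL_apply_apply] at this
  rw [ContinuousLinearMap.coe_coe, this, real_inner_comm]

end Gradient

theorem sqrt_sum_sq_le_sqrt_card_mul {ι : Type*} [Fintype ι] {a : ι → ℝ} {c : ℝ}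
    (h : ∀ i, |a i| ≤ c) : √(∑ i, a i ^ 2) ≤ √(Fintype.card ι) * c := by
  rcases isEmpty_or_nonempty ι with hι | ⟨⟨i₀⟩⟩
  · simp
  have hc : 0 ≤ c := (abs_nonneg _).trans (h i₀)
  calc √(∑ i, a i ^ 2) ≤ √(∑ _i : ι, c ^ 2) :=
        Real.sqrt_le_sqrt <| Finset.sum_le_sum fun i _ =>
          sq_le_sq' (abs_le.1 (h i)).1 (abs_le.1 (h i)).2
    _ = √(Fintype.card ι) * c := by
        rw [Finset.sum_const, nsmul_eq_mul, Real.sqrt_mul (Nat.cast_nonneg _), Real.sqrt_sq hc,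
          Finset.card_univ]

theorem abs_dotProduct_sub_hessian_mulVec_le {ι : Type*} [Fintype ι] [DecidableEq ι]
    {f : EuclideanSpace ℝ ι → ℝ} {g : EuclideanSpace ℝ ι → EuclideanSpace ℝ ι}
    {hessM : EuclideanSpace ℝ ι → Matrix ι ι ℝ} {L : ℝ} {x d : EuclideanSpace ℝ ι}
    {H : Matrix ι ι ℝ} (hg : ∀ u, HasGradientAt f (g u) u)
    (hhess : ∀ u, HasFDerivAt g (Matrix.toEuclideanCLM (𝕜 := ℝ) (hessM u)) u)
    (hLip : ∀ u, ‖Matrix.toEuclideanCLM (𝕜 := ℝ) (hessM u) -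
      Matrix.toEuclideanCLM (𝕜 := ℝ) (hessM x)‖ ≤ L * ‖u - x‖)
    (hinterp : f x + ⟪g x, d⟫ + 1 / 2 * (d ⬝ᵥ H *ᵥ d) = f (x + d)) :
    |d ⬝ᵥ (H - hessM x) *ᵥ d| ≤ L / 3 * ‖d‖ ^ 3 := by
  have h := abs_sub_taylor_two_le_of_lipschitz hg hhess hLip d
  rw [← hinterp, Matrix.inner_toEuclideanCLM] at h
  have hsplit : f x + ⟪g x, d⟫ + 1 / 2 * (d ⬝ᵥ H *ᵥ d) - f x - ⟪g x, d⟫ -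
      1 / 2 * (d ⬝ᵥ hessM x *ᵥ d) = 1 / 2 * (d ⬝ᵥ (H - hessM x) *ᵥ d) := by
    rw [Matrix.sub_mulVec, dotProduct_sub]
    ring
  rw [hsplit, abs_mul, abs_of_pos one_half_pos] at h
  linarith

/-- Theorem 2.2 of the paper: under a conditioning (nonsingularity) assumption on the scaled
constraint map, a symmetric matrix `H` satisfying the enriched interpolating conditions is a
fully quadratic Hessian model, i.e. `‖H − ∇²f(x)‖_F = O(Δ_y)`. -/
theorem fully_quadratic_hessian_model
    {n p : ℕ} (f : EuclideanSpace ℝ (Fin n) → ℝ)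
    (g : EuclideanSpace ℝ (Fin n) → EuclideanSpace ℝ (Fin n))
    (hessM : EuclideanSpace ℝ (Fin n) → Matrix (Fin n) (Fin n) ℝ)
    (L : ℝ)
    (hg : ∀ u, HasGradientAt f (g u) u)
    (hhess : ∀ u, HasFDerivAt g (Matrix.toEuclideanCLM (𝕜 := ℝ) (hessM u)) u)
    (hLip : ∀ u v, ‖Matrix.toEuclideanCLM (𝕜 := ℝ) (hessM u) -
      Matrix.toEuclideanCLM (𝕜 := ℝ) (hessM v)‖ ≤ L * ‖u - v‖)
    (x v : EuclideanSpace ℝ (Fin n)) (y : Fin p → EuclideanSpace ℝ (Fin n))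
    (Δy : ℝ) (hΔy : IsGreatest (Set.range fun ℓ => ‖y ℓ - x‖) Δy) (hΔypos : 0 < Δy)
    (K : ℝ) (hK : 0 ≤ K)
    -- `‖A‖_F ≤ K ‖Φ̂(A)‖` for every symmetric matrix `A`, where `Φ̂` is the scaled
    -- constraint map and the norm on `ℝᵖ × ℝⁿ` is Euclidean:
    (hKbound : ∀ A : Matrix (Fin n) (Fin n) ℝ, A.IsSymm →
      frobNorm A ≤ K * Real.sqrt
        ((∑ ℓ : Fin p, ((1 / (2 * Δy ^ 2)) * ((y ℓ - x) ⬝ᵥ A.mulVec (y ℓ - x))) ^ 2) +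
          ∑ i, (A.mulVec v i) ^ 2))
    (H : Matrix (Fin n) (Fin n) ℝ) (hHsymm : H.IsSymm)
    (hinterp : ∀ ℓ : Fin p,
      f x + ⟪g x, y ℓ - x⟫ + (1 / 2) * ((y ℓ - x) ⬝ᵥ H.mulVec (y ℓ - x)) = f (y ℓ))
    (hhvp : H.mulVec v = (hessM x).mulVec v) :
    frobNorm (H - hessM x) ≤ K * Real.sqrt p * (L / 6) * Δy := by
  obtain ⟨ℓ₀, hℓ₀ : ‖y ℓ₀ - x‖ = Δy⟩ := hΔy.1
  have hL : 0 ≤ L := by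
    have := (norm_nonneg _).trans (hLip (y ℓ₀) x)
    rw [hℓ₀] at this
    exact nonneg_of_mul_nonneg_left this hΔypos
  have hhess_symm : (hessM x).IsSymm := Matrix.isHermitian_iff_isSymm.1 <|
    Matrix.isSymmetric_toEuclideanLin_iff.1 <|
      isSymmetric_of_hasFDerivAt_gradient (.of_forall hg) (hhess x)
  have hsample (ℓ : Fin p) :
      |1 / (2 * Δy ^ 2) * ((y ℓ - x) ⬝ᵥ (H - hessM x) *ᵥ (y ℓ - x))| ≤ L / 6 * Δy := by
    have hq := abs_dotProduct_sub_hessian_mulVec_le hg hhess (fun u => hLip u x)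
      (by rw [add_sub_cancel]; exact hinterp ℓ)
    have hd : ‖y ℓ - x‖ ≤ Δy := hΔy.2 ⟨ℓ, rfl⟩
    rw [abs_mul, abs_of_pos (by positivity)]
    calc 1 / (2 * Δy ^ 2) * |(y ℓ - x) ⬝ᵥ (H - hessM x) *ᵥ (y ℓ - x)|
        ≤ 1 / (2 * Δy ^ 2) * (L / 3 * Δy ^ 3) := by gcongr; exact hq.trans (by gcongr)
      _ = L / 6 * Δy := by field_simp; ring
  refine (hKbound _ (hHsymm.sub hhess_symm)).trans ((mul_le_mul_of_nonneg_left ?_ hK).trans_eq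
    (by ring : K * (√p * (L / 6 * Δy)) = _))
  rw [Matrix.sub_mulVec, hhvp, sub_self]
  simpa using sqrt_sum_sq_le_sqrt_card_mul hsample
end

section
/- Let n, p be positive integers, let x ∈ ℝⁿ, let y¹, …, yᵖ ∈ ℝⁿ, and let f : ℝⁿ → ℝ be the quadratic function f(y) = a + bᵀ(y − x) + ½ (y − x)ᵀ C (y − x), where a ∈ ℝ, b ∈ ℝⁿ, and C is a symmetric invertible n×n real matrix. Set zˡ = C (yˡ − x) for ℓ = 1, …, p. Let dᵖʳᵉᵛ ∈ ℝⁿ, and suppose d* ∈ ℝⁿ satisfies the Newton-direction interpolating conditions (zˡ)ᵀ d* = −f(yˡ) + f(x) + ½ (yˡ − x)ᵀ zˡ for ℓ = 1, …, p, and minimizes ‖d − dᵖʳᵉᵛ‖ among all d ∈ ℝⁿ satisfying those conditions. Then ‖d* − (−C⁻¹ b)‖ ≤ ‖dᵖʳᵉᵛ − (−C⁻¹ b)‖. -/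
open scoped Matrix

/-- Euclidean norm of a vector in `ℝⁿ`. -/
noncomputable def eNorm {n : ℕ} (u : Fin n → ℝ) : ℝ :=
  Real.sqrt (∑ i, u i ^ 2)

/-- Theorem 3.1 of the paper: in the quadratic case, the least-change Newton direction
recovery does not increase the error to the exact Newton direction `−C⁻¹b`. -/
theorem newton_direction_recovery_error_decrease
    {n p : ℕ} (hn : 0 < n) (hp : 0 < p)
    (x : Fin n → ℝ) (y : Fin p → Fin n → ℝ)
    (a : ℝ) (b : Fin n → ℝ)
    (C : Matrix (Fin n) (Fin n) ℝ) (hC : C.IsSymm) (hCinv : IsUnit C)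
    (f : (Fin n → ℝ) → ℝ)
    (hf : ∀ u, f u = a + b ⬝ᵥ (u - x) + (1 / 2) * ((u - x) ⬝ᵥ C.mulVec (u - x)))
    (z : Fin p → Fin n → ℝ) (hz : ∀ ℓ, z ℓ = C.mulVec (y ℓ - x))
    (dprev dstar : Fin n → ℝ)
    (hfeas : ∀ ℓ : Fin p,
      z ℓ ⬝ᵥ dstar = -f (y ℓ) + f x + (1 / 2) * ((y ℓ - x) ⬝ᵥ z ℓ))
    (hmin : ∀ d : Fin n → ℝ,
      (∀ ℓ : Fin p, z ℓ ⬝ᵥ d = -f (y ℓ) + f x + (1 / 2) * ((y ℓ - x) ⬝ᵥ z ℓ)) →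
      eNorm (dstar - dprev) ≤ eNorm (d - dprev)) :
    eNorm (dstar - -C⁻¹.mulVec b) ≤ eNorm (dprev - -C⁻¹.mulVec b) := by
  set dN : Fin n → ℝ := -C⁻¹.mulVec b with hdN
  have hdet : IsUnit C.det := (Matrix.isUnit_iff_isUnit_det C).mp hCinv
  have hCC : C.mulVec (C⁻¹.mulVec b) = b := by
    rw [Matrix.mulVec_mulVec, Matrix.mul_nonsing_inv C hdet, Matrix.one_mulVec]
  -- dN is feasible
  have hfeasN : ∀ ℓ : Fin p,
      z ℓ ⬝ᵥ dN = -f (y ℓ) + f x + (1 / 2) * ((y ℓ - x) ⬝ᵥ z ℓ) := by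
    intro ℓ
    have hsymm : ∀ w v' : Fin n → ℝ, (C.mulVec w) ⬝ᵥ v' = w ⬝ᵥ (C.mulVec v') := by
      intro w v'
      rw [dotProduct_comm, Matrix.dotProduct_mulVec, ← Matrix.mulVec_transpose,
        hC.eq, dotProduct_comm]
    have h1 : z ℓ ⬝ᵥ dN = -((y ℓ - x) ⬝ᵥ b) := by
      rw [hdN, hz, dotProduct_neg, hsymm, hCC]
    have hfx : f x = a := by simp [hf]
    rw [h1, hfx, hf (y ℓ), hz ℓ, dotProduct_comm b (y ℓ - x)]
    ring
  -- orthogonality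
  set u : Fin n → ℝ := dstar - dprev with hu
  set v : Fin n → ℝ := dN - dstar with hv
  set s : ℝ := ∑ i, u i * v i with hs
  set B : ℝ := ∑ i, v i ^ 2 with hB
  have hBnn : 0 ≤ B := Finset.sum_nonneg fun i _ => sq_nonneg _
  have key : ∀ t : ℝ, 0 ≤ 2 * t * s + t ^ 2 * B := by
    intro t
    have hfeast : ∀ ℓ : Fin p,
        z ℓ ⬝ᵥ (dstar + t • v) = -f (y ℓ) + f x + (1 / 2) * ((y ℓ - x) ⬝ᵥ z ℓ) := by
      intro ℓ
      have := hfeas ℓ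
      have h2 := hfeasN ℓ
      have hzv : z ℓ ⬝ᵥ v = 0 := by
        rw [hv, dotProduct_sub, this, h2, sub_self]
      rw [dotProduct_add, dotProduct_smul, hzv]
      simpa using this
    have hle := hmin _ hfeast
    have hsq : ∑ i, (dstar - dprev) i ^ 2 ≤ ∑ i, (dstar + t • v - dprev) i ^ 2 := by
      by_contra hcon
      push_neg at hcon
      have h1 : 0 ≤ ∑ i, (dstar + t • v - dprev) i ^ 2 :=
        Finset.sum_nonneg fun i _ => sq_nonneg _
      have hlt := Real.sqrt_lt_sqrt h1 hcon
      simp only [eNorm] at hle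
      exact absurd hle (not_le.mpr hlt)
    have hexp : ∑ i, (dstar + t • v - dprev) i ^ 2
        = (∑ i, u i ^ 2) + (2 * t * s + t ^ 2 * B) := by
      rw [hs, hB, Finset.mul_sum, Finset.mul_sum, ← Finset.sum_add_distrib,
        ← Finset.sum_add_distrib]
      refine Finset.sum_congr rfl fun i _ => ?_
      simp only [Pi.add_apply, Pi.sub_apply, Pi.smul_apply, smul_eq_mul, hu]
      ring
    have : ∑ i, (dstar - dprev) i ^ 2 = ∑ i, u i ^ 2 := by rw [hu]
    linarith [hsq, hexp.ge, hexp.le]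
  have hs0 : s = 0 := by
    have h1 := key (-s / (B + 1))
    have hB1 : (0:ℝ) < B + 1 := by linarith
    have : 2 * (-s / (B + 1)) * s + (-s / (B + 1)) ^ 2 * B
        = -(s ^ 2 * (B + 2)) / (B + 1) ^ 2 := by
      field_simp
      ring
    rw [this] at h1
    have h2 : 0 ≤ -(s ^ 2 * (B + 2)) := by
      have h3 := mul_nonneg h1 (sq_nonneg (B + 1))
      rwa [div_mul_cancel₀ _ (by positivity : ((B + 1) ^ 2 : ℝ) ≠ 0)] at h3
    have hs2 : s ^ 2 = 0 := by nlinarith [sq_nonneg s]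
    exact pow_eq_zero_iff (by norm_num) |>.mp hs2
  -- conclude
  have hfinal : ∑ i, (dstar - dN) i ^ 2 ≤ ∑ i, (dprev - dN) i ^ 2 := by
    have h1 : ∑ i, (dstar - dN) i ^ 2 = B := by
      rw [hB]; refine Finset.sum_congr rfl fun i _ => ?_
      simp only [hv, Pi.sub_apply]; ring
    have h2 : ∑ i, (dprev - dN) i ^ 2 = (∑ i, u i ^ 2) + 2 * s + B := by
      rw [hs, hB, Finset.mul_sum, ← Finset.sum_add_distrib, ← Finset.sum_add_distrib]
      refine Finset.sum_congr rfl fun i _ => ?_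
      simp only [hu, hv, Pi.sub_apply]; ring
    have hA : 0 ≤ ∑ i, u i ^ 2 := Finset.sum_nonneg fun i _ => sq_nonneg _
    rw [h1, h2, hs0]
    linarith
  exact Real.sqrt_le_sqrt hfinal
end

section
/- Let n, p be positive integers, let x ∈ ℝⁿ, let y¹, …, yᵖ ∈ ℝⁿ, and let f : ℝⁿ → ℝ be the quadratic function f(y) = a + bᵀ(y − x) + ½ (y − x)ᵀ C (y − x), where a ∈ ℝ, b ∈ ℝⁿ, and C is a symmetric invertible n×n real matrix. Set zˡ = C (yˡ − x) for ℓ = 1, …, p. Let dᵖʳᵉᵛ ∈ ℝⁿ, and suppose d* ∈ ℝⁿ satisfies the Newton-direction interpolating conditions (zˡ)ᵀ d* = −f(yˡ) + f(x) + ½ (yˡ − x)ᵀ zˡ for ℓ = 1, …, p, and minimizes ‖d − dᵖʳᵉᵛ‖ among all d ∈ ℝⁿ satisfying those conditions. Then ‖d* − (−C⁻¹ b)‖² = ‖dᵖʳᵉᵛ − (−C⁻¹ b)‖² − ‖d* − dᵖʳᵉᵛ‖². -/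
/-!
For the quadratic `f`, the right-hand side of the `ℓ`-th interpolating condition is
`-bᵀ(yˡ - x)`, and by symmetry of `C` so is `(zˡ)ᵀ(-C⁻¹b)`: the exact Newton direction satisfies
the conditions. Hence `d*` is the orthogonal projection of `dᵖʳᵉᵛ` onto an affine subspace
containing `-C⁻¹b`; minimality along the line from `d*` to `-C⁻¹b` makes `d* - dᵖʳᵉᵛ`
orthogonal to `-C⁻¹b - d*`, and Pythagoras gives the identity.
-/

open scoped Matrix

lemma eNorm_eq_sqrt_dotProduct {n : ℕ} (u : Fin n → ℝ) : eNorm u = √(u ⬝ᵥ u) := by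
  simp only [eNorm, dotProduct, pow_two]

lemma eNorm_sq {n : ℕ} (u : Fin n → ℝ) : eNorm u ^ 2 = u ⬝ᵥ u := by
  rw [eNorm_eq_sqrt_dotProduct, Real.sq_sqrt (by simpa using dotProduct_self_star_nonneg u)]

lemma eNorm_le_eNorm_iff {n : ℕ} (u v : Fin n → ℝ) : eNorm u ≤ eNorm v ↔ u ⬝ᵥ u ≤ v ⬝ᵥ v := by
  rw [eNorm_eq_sqrt_dotProduct, eNorm_eq_sqrt_dotProduct,
    Real.sqrt_le_sqrt_iff (by simpa using dotProduct_self_star_nonneg v)]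

section LeastChange

variable {ι κ : Type*} [Fintype ι]

/-- The quadratic `t ↦ 2 t (u ⬝ᵥ w) + t² (w ⬝ᵥ w)` is nonnegative, so its discriminant
`4 (u ⬝ᵥ w)²` is nonpositive. -/
lemma dotProduct_eq_zero_of_forall_le_dotProduct_add_smul {u w : ι → ℝ}
    (h : ∀ t : ℝ, u ⬝ᵥ u ≤ (u + t • w) ⬝ᵥ (u + t • w)) : u ⬝ᵥ w = 0 := by
  have hquad : ∀ t : ℝ, 0 ≤ (w ⬝ᵥ w) * (t * t) + 2 * (u ⬝ᵥ w) * t + 0 := fun t => by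
    have ht := h t
    simp only [add_dotProduct, dotProduct_add, smul_dotProduct, dotProduct_smul, smul_eq_mul,
      dotProduct_comm w u] at ht
    linarith
  have hdiscr := discrim_le_zero hquad
  rw [discrim] at hdiscr
  nlinarith [sq_nonneg (u ⬝ᵥ w)]

lemma dotProduct_self_sub_eq_of_isLeastChange (z : κ → ι → ℝ) (r : κ → ℝ)
    {dprev dstar e : ι → ℝ} (hstar : ∀ ℓ, z ℓ ⬝ᵥ dstar = r ℓ) (he : ∀ ℓ, z ℓ ⬝ᵥ e = r ℓ)
    (hmin : ∀ d, (∀ ℓ, z ℓ ⬝ᵥ d = r ℓ) →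
      (dstar - dprev) ⬝ᵥ (dstar - dprev) ≤ (d - dprev) ⬝ᵥ (d - dprev)) :
    (dstar - e) ⬝ᵥ (dstar - e) =
      (dprev - e) ⬝ᵥ (dprev - e) - (dstar - dprev) ⬝ᵥ (dstar - dprev) := by
  have hline : ∀ t : ℝ, ∀ ℓ, z ℓ ⬝ᵥ (dstar + t • (e - dstar)) = r ℓ := fun t ℓ => by
    simp [dotProduct_add, dotProduct_smul, dotProduct_sub, hstar ℓ, he ℓ]
  have horth : (dstar - dprev) ⬝ᵥ (e - dstar) = 0 :=
    dotProduct_eq_zero_of_forall_le_dotProduct_add_smul fun t => by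
      simpa [sub_add_eq_add_sub] using hmin _ (hline t)
  set u := dstar - dprev
  set w := e - dstar
  have hprev : dprev - e = -u - w := by simp only [u, w]; abel
  have hstar_e : dstar - e = -w := by simp only [w]; abel
  rw [hprev, hstar_e]
  simp only [sub_dotProduct, dotProduct_sub, neg_dotProduct, dotProduct_neg, neg_neg,
    dotProduct_comm w u, horth]
  ring

end LeastChange

lemma mulVec_dotProduct_neg_inv_mulVec {n : Type*} [Fintype n] [DecidableEq n]
    {C : Matrix n n ℝ} (hC : C.IsSymm) (hCinv : IsUnit C) (v b : n → ℝ) :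
    C *ᵥ v ⬝ᵥ -(C⁻¹ *ᵥ b) = -(v ⬝ᵥ b) := by
  have hCC : C *ᵥ (C⁻¹ *ᵥ b) = b := by
    rw [Matrix.mulVec_mulVec, Matrix.mul_nonsing_inv _ ((Matrix.isUnit_iff_isUnit_det C).mp hCinv),
      Matrix.one_mulVec]
  rw [dotProduct_neg, dotProduct_comm, Matrix.dotProduct_mulVec, ← Matrix.mulVec_transpose,
    hC.eq, hCC, dotProduct_comm]

theorem newton_direction_recovery_pythagoras_general
    {n p : ℕ}
    (x : Fin n → ℝ) (y : Fin p → Fin n → ℝ)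
    (a : ℝ) (b : Fin n → ℝ)
    (C : Matrix (Fin n) (Fin n) ℝ) (hC : C.IsSymm) (hCinv : IsUnit C)
    (f : (Fin n → ℝ) → ℝ)
    (hf : ∀ u, f u = a + b ⬝ᵥ (u - x) + (1 / 2) * ((u - x) ⬝ᵥ C.mulVec (u - x)))
    (z : Fin p → Fin n → ℝ) (hz : ∀ ℓ, z ℓ = C.mulVec (y ℓ - x))
    (dprev dstar : Fin n → ℝ)
    (hfeas : ∀ ℓ : Fin p,
      z ℓ ⬝ᵥ dstar = -f (y ℓ) + f x + (1 / 2) * ((y ℓ - x) ⬝ᵥ z ℓ))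
    (hmin : ∀ d : Fin n → ℝ,
      (∀ ℓ : Fin p, z ℓ ⬝ᵥ d = -f (y ℓ) + f x + (1 / 2) * ((y ℓ - x) ⬝ᵥ z ℓ)) →
      eNorm (dstar - dprev) ≤ eNorm (d - dprev)) :
    eNorm (dstar - -C⁻¹.mulVec b) ^ 2 = eNorm (dprev - -C⁻¹.mulVec b) ^ 2 - eNorm (dstar - dprev) ^ 2 := by
  have hnewton : ∀ ℓ, z ℓ ⬝ᵥ -C⁻¹.mulVec b = -f (y ℓ) + f x + (1 / 2) * ((y ℓ - x) ⬝ᵥ z ℓ) := by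
    intro ℓ
    rw [hf (y ℓ), hf x, hz ℓ, mulVec_dotProduct_neg_inv_mulVec hC hCinv, dotProduct_comm]
    simp only [sub_self, dotProduct_zero, Matrix.mulVec_zero]
    ring
  simp only [eNorm_sq]
  exact dotProduct_self_sub_eq_of_isLeastChange z _ hfeas hnewton
    fun d hd => (eNorm_le_eNorm_iff _ _).1 (hmin d hd)

/-- Theorem 3.1 of the paper: in the quadratic case, the least-change Newton direction
recovery does not increase the error to the exact Newton direction `−C⁻¹b`. -/
theorem newton_direction_recovery_pythagoras
    {n p : ℕ} (hn : 0 < n) (hp : 0 < p)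
    (x : Fin n → ℝ) (y : Fin p → Fin n → ℝ)
    (a : ℝ) (b : Fin n → ℝ)
    (C : Matrix (Fin n) (Fin n) ℝ) (hC : C.IsSymm) (hCinv : IsUnit C)
    (f : (Fin n → ℝ) → ℝ)
    (hf : ∀ u, f u = a + b ⬝ᵥ (u - x) + (1 / 2) * ((u - x) ⬝ᵥ C.mulVec (u - x)))
    (z : Fin p → Fin n → ℝ) (hz : ∀ ℓ, z ℓ = C.mulVec (y ℓ - x))
    (dprev dstar : Fin n → ℝ)
    (hfeas : ∀ ℓ : Fin p,
      z ℓ ⬝ᵥ dstar = -f (y ℓ) + f x + (1 / 2) * ((y ℓ - x) ⬝ᵥ z ℓ))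
    (hmin : ∀ d : Fin n → ℝ,
      (∀ ℓ : Fin p, z ℓ ⬝ᵥ d = -f (y ℓ) + f x + (1 / 2) * ((y ℓ - x) ⬝ᵥ z ℓ)) →
      eNorm (dstar - dprev) ≤ eNorm (d - dprev)) :
    eNorm (dstar - -C⁻¹.mulVec b) ^ 2 = eNorm (dprev - -C⁻¹.mulVec b) ^ 2 - eNorm (dstar - dprev) ^ 2 :=
  newton_direction_recovery_pythagoras_general x y a b C hC hCinv f hf z hz dprev dstar hfeas hmin
end

section
/- Let f : ℝⁿ → ℝ be twice continuously differentiable with Hessian Lipschitz continuous with constant L (in operator norm), let x ∈ ℝⁿ, and suppose H = ∇²f(x) is invertible. Let y¹, …, yᵖ ∈ ℝⁿ with p ≥ n, set zˡ = H(yˡ − x) for ℓ = 1, …, p, and Δ_y = max_{1 ≤ ℓ ≤ p} ‖yˡ − x‖, assumed positive. Let M_L^y be the p×n matrix whose ℓ-th row is (1/Δ_y)(yˡ − x)ᵀ, suppose H (M_L^y)ᵀ (M_L^y) H is invertible, and define R_y = ( H (M_L^y)ᵀ (M_L^y) H )⁻¹ H (M_L^y)ᵀ. If dᴺ ∈ ℝⁿ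 satisfies the Newton-direction interpolating conditions (zˡ)ᵀ dᴺ = −f(yˡ) + f(x) + ½ (yˡ − x)ᵀ zˡ for all ℓ = 1, …, p, then ‖ −H⁻¹ ∇f(x) − dᴺ ‖ ≤ ‖R_y‖ · √p · (L/6) · Δ_y². -/
open scoped Matrix RealInnerProductSpace Matrix.Norms.L2Operator

/-!
Write `H = ∇²f(x)` and `d = -H⁻¹∇f(x)`. Since `H` is symmetric, `⟪H (yˡ - x), d - dᴺ⟫` equals
`f(yˡ) - f(x) - ⟪∇f(x), yˡ - x⟫ - ½⟪H (yˡ - x), yˡ - x⟫` exactly, and the Lipschitz Hessian bounds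
this quadratic Taylor remainder by `L/6 ‖yˡ - x‖³`. So every coordinate of `M_L^y H (d - dᴺ)` is at
most `L/6 Δ_y²`, its Euclidean norm is at most `√p L/6 Δ_y²`, and `R_y` is a left inverse of
`M_L^y H`.
-/

theorem norm_sub_le_of_norm_deriv_le_mul_pow {E : Type*} [NormedAddCommGroup E]
    [NormedSpace ℝ E] {φ φ' : ℝ → E} {C : ℝ} (k : ℕ) (hφ : ∀ t, HasDerivAt φ (φ' t) t)
    (hφ' : ∀ t ∈ Set.Ico (0 : ℝ) 1, ‖φ' t‖ ≤ C * t ^ k) :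
    ‖φ 1 - φ 0‖ ≤ C / (k + 1) := by
  have hB : ∀ t : ℝ, HasDerivAt (fun t => C / (k + 1) * t ^ (k + 1)) (C * t ^ k) t := by
    intro t
    refine ((hasDerivAt_pow (k + 1) t).const_mul (C / (k + 1))).congr_deriv ?_
    push_cast [Nat.add_sub_cancel]
    field_simp
  simpa using image_norm_le_of_norm_deriv_right_le_deriv_boundary (a := 0) (b := 1)
    (f := fun t => φ t - φ 0)
    (fun t _ => ((hφ t).continuousAt.sub continuousAt_const).continuousWithinAt)
    (fun t _ => ((hφ t).sub_const (φ 0)).hasDerivWithinAt) (by simp) hB hφ'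
    (Set.right_mem_Icc.2 zero_le_one)

theorem norm_linear_taylor_remainder_le {E F : Type*} [NormedAddCommGroup E] [NormedSpace ℝ E]
    [NormedAddCommGroup F] [NormedSpace ℝ F] {g : E → F} {A : E → E →L[ℝ] F} {L : ℝ}
    (hA : ∀ u, HasFDerivAt g (A u) u) (hLip : ∀ u v, ‖A u - A v‖ ≤ L * ‖u - v‖) (x s : E) :
    ‖g (x + s) - g x - A x s‖ ≤ L / 2 * ‖s‖ ^ 2 := by
  have hφ : ∀ t : ℝ, HasDerivAt (fun t : ℝ => g (x + t • s) - t • A x s)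
      ((A (x + t • s) - A x) s) t := by
    intro t
    have hline : HasDerivAt (fun t : ℝ => x + t • s) s t := by
      simpa using ((hasDerivAt_id t).smul_const s).const_add x
    exact (((hA _).comp_hasDerivAt t hline).sub
      ((hasDerivAt_id t).smul_const (A x s))).congr_deriv (by simp)
  have := norm_sub_le_of_norm_deriv_le_mul_pow (C := L * ‖s‖ ^ 2) 1 hφ fun t ht => by
    calc ‖(A (x + t • s) - A x) s‖ ≤ ‖A (x + t • s) - A x‖ * ‖s‖ := (A _ - A x).le_opNorm s
      _ ≤ L * ‖t • s‖ * ‖s‖ := by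
        gcongr
        simpa using hLip (x + t • s) x
      _ = L * ‖s‖ ^ 2 * t ^ 1 := by
        rw [norm_smul, Real.norm_of_nonneg ht.1]
        ring
  convert this using 1
  · simp [sub_right_comm]
  · norm_num
    ring

theorem abs_quadratic_taylor_remainder_le {E : Type*} [NormedAddCommGroup E]
    [InnerProductSpace ℝ E] [CompleteSpace E] {f : E → ℝ} {g : E → E} {A : E → E →L[ℝ] E}
    {L : ℝ} (hg : ∀ u, HasGradientAt f (g u) u) (hA : ∀ u, HasFDerivAt g (A u) u)
    (hLip : ∀ u v, ‖A u - A v‖ ≤ L * ‖u - v‖) (x y : E) :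
    |f y - f x - ⟪g x, y - x⟫ - 1 / 2 * ⟪A x (y - x), y - x⟫| ≤ L / 6 * ‖y - x‖ ^ 3 := by
  obtain ⟨s, rfl⟩ : ∃ s, y = x + s := ⟨y - x, by abel⟩
  rw [add_sub_cancel_left]
  have hφ : ∀ t : ℝ, HasDerivAt
      (fun t : ℝ => f (x + t • s) - t * ⟪g x, s⟫ - t ^ 2 / 2 * ⟪A x s, s⟫)
      ⟪g (x + t • s) - g x - A x (t • s), s⟫ t := by
    intro t
    have hline : HasDerivAt (fun t : ℝ => x + t • s) s t := by
      simpa using ((hasDerivAt_id t).smul_const s).const_add x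
    have hf : HasDerivAt (fun t : ℝ => f (x + t • s)) ⟪g (x + t • s), s⟫ t :=
      (hg _).hasFDerivAt.comp_hasDerivAt t hline
    refine ((hf.sub ((hasDerivAt_id t).mul_const _)).sub
      (((hasDerivAt_pow 2 t).div_const 2).mul_const _)).congr_deriv ?_
    simp [inner_sub_left, real_inner_smul_left]
  have := norm_sub_le_of_norm_deriv_le_mul_pow (C := L / 2 * ‖s‖ ^ 3) 2 hφ fun t ht => by
    calc ‖⟪g (x + t • s) - g x - A x (t • s), s⟫‖
        ≤ ‖g (x + t • s) - g x - A x (t • s)‖ * ‖s‖ := norm_inner_le_norm _ _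
      _ ≤ L / 2 * ‖t • s‖ ^ 2 * ‖s‖ := by
        gcongr
        exact norm_linear_taylor_remainder_le hA hLip x (t • s)
      _ = L / 2 * ‖s‖ ^ 3 * t ^ 2 := by
        rw [norm_smul, Real.norm_of_nonneg ht.1]
        ring
  convert this using 1
  · simp [Real.norm_eq_abs]
    ring_nf
  · norm_num
    ring

theorem inner_hessian_comm {E : Type*} [NormedAddCommGroup E] [InnerProductSpace ℝ E]
    [CompleteSpace E] {f : E → ℝ} {g : E → E} {A : E →L[ℝ] E} {x : E}
    (hg : ∀ u, HasGradientAt f (g u) u) (hA : HasFDerivAt g A x) (v w : E) :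
    ⟪A v, w⟫ = ⟪A w, v⟫ :=
  let T : E →L[ℝ] E →L[ℝ] ℝ :=
    (InnerProductSpace.toDual ℝ E).toContinuousLinearEquiv.toContinuousLinearMap
  second_derivative_symmetric (f' := fun u => T (g u)) (fun u => (hg u).hasFDerivAt)
    (T.hasFDerivAt.comp x hA) v w

theorem inner_sub_newton_eq_taylor_remainder {E : Type*} [NormedAddCommGroup E]
    [InnerProductSpace ℝ E] {f : E → ℝ} {A : E →L[ℝ] E} (hA : ∀ v w, ⟪A v, w⟫ = ⟪A w, v⟫)
    {x y gx dNewton d : E} (hNewton : A dNewton = -gx)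
    (hd : ⟪A (y - x), d⟫ = -f y + f x + 1 / 2 * ⟪y - x, A (y - x)⟫) :
    ⟪A (y - x), dNewton - d⟫ = f y - f x - ⟪gx, y - x⟫ - 1 / 2 * ⟪A (y - x), y - x⟫ := by
  rw [inner_sub_right, hd, hA, hNewton, inner_neg_left, real_inner_comm (y - x),
    real_inner_comm (A (y - x))]
  ring

theorem abs_inner_sub_newton_le {E : Type*} [NormedAddCommGroup E] [InnerProductSpace ℝ E]
    [CompleteSpace E] {f : E → ℝ} {g : E → E} {A : E → E →L[ℝ] E} {L : ℝ}
    (hg : ∀ u, HasGradientAt f (g u) u) (hA : ∀ u, HasFDerivAt g (A u) u)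
    (hLip : ∀ u v, ‖A u - A v‖ ≤ L * ‖u - v‖) {x y dNewton d : E}
    (hNewton : A x dNewton = -g x)
    (hd : ⟪A x (y - x), d⟫ = -f y + f x + 1 / 2 * ⟪y - x, A x (y - x)⟫) :
    |⟪A x (y - x), dNewton - d⟫| ≤ L / 6 * ‖y - x‖ ^ 3 := by
  rw [inner_sub_newton_eq_taylor_remainder (inner_hessian_comm hg (hA x)) hNewton hd]
  exact abs_quadratic_taylor_remainder_le hg hA hLip x y

theorem EuclideanSpace.norm_le_sqrt_card_mul {𝕜 ι : Type*} [RCLike 𝕜] [Fintype ι]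
    {v : EuclideanSpace 𝕜 ι} {C : ℝ} (hv : ∀ i, ‖v i‖ ≤ C) :
    ‖v‖ ≤ √(Fintype.card ι) * C := by
  rcases isEmpty_or_nonempty ι with hι | ⟨⟨i⟩⟩
  · simp [Subsingleton.elim v 0]
  have hC : 0 ≤ C := (norm_nonneg _).trans (hv i)
  rw [EuclideanSpace.norm_eq, ← Real.sqrt_sq hC, ← Real.sqrt_mul (Nat.cast_nonneg _)]
  gcongr
  calc ∑ i, ‖v i‖ ^ 2 ≤ ∑ _i : ι, C ^ 2 := by gcongr; exact hv _
    _ = _ := by simp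

theorem Matrix.norm_le_l2_opNorm_mul_of_mul_eq_one {m n : Type*} [Fintype m] [Fintype n]
    [DecidableEq m] [DecidableEq n] {R : Matrix n m ℝ} {B : Matrix m n ℝ} (hRB : R * B = 1)
    (v : EuclideanSpace ℝ n) : ‖v‖ ≤ ‖R‖ * ‖WithLp.toLp 2 (B *ᵥ v)‖ :=
  calc ‖v‖ = ‖(EuclideanSpace.equiv n ℝ).symm (R *ᵥ (B *ᵥ v))‖ := by
        rw [Matrix.mulVec_mulVec, hRB, Matrix.one_mulVec]
        rfl
    _ ≤ _ := Matrix.l2_opNorm_mulVec R (WithLp.toLp 2 (B *ᵥ v))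

theorem Matrix.mul_mulVec_apply_eq_inner {m n : Type*} [Fintype n] [DecidableEq n]
    {M : Matrix m n ℝ} {H : Matrix n n ℝ} {c : ℝ} {s : m → EuclideanSpace ℝ n}
    (hM : ∀ ℓ i, M ℓ i = c * s ℓ i) (v : EuclideanSpace ℝ n) (ℓ : m) :
    ((M * H) *ᵥ v) ℓ = c * ⟪Matrix.toEuclideanCLM (𝕜 := ℝ) H v, s ℓ⟫ := by
  have hMℓ : M ℓ = c • WithLp.ofLp (s ℓ) := funext (hM ℓ)
  rw [← Matrix.mulVec_mulVec, EuclideanSpace.inner_eq_star_dotProduct, star_trivial,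
    Matrix.ofLp_toEuclideanCLM]
  simp only [Matrix.mulVec, hMℓ, smul_dotProduct, smul_eq_mul]

theorem Matrix.toEuclideanCLM_neg_inv_mulVec {n : Type*} [Fintype n] [DecidableEq n]
    {H : Matrix n n ℝ} (hH : IsUnit H) (v : EuclideanSpace ℝ n) :
    Matrix.toEuclideanCLM (𝕜 := ℝ) H ((WithLp.equiv 2 (n → ℝ)).symm (-(H⁻¹ *ᵥ v))) = -v := by
  ext i
  simp [Matrix.mulVec_mulVec, Matrix.mul_nonsing_inv _ ((Matrix.isUnit_iff_isUnit_det _).mp hH)]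

theorem newton_direction_recovery_error_bound_Ry_general
    {n p : ℕ}
    (f : EuclideanSpace ℝ (Fin n) → ℝ)
    (g : EuclideanSpace ℝ (Fin n) → EuclideanSpace ℝ (Fin n))
    (hessM : EuclideanSpace ℝ (Fin n) → Matrix (Fin n) (Fin n) ℝ)
    (L : ℝ)
    (hg : ∀ u, HasGradientAt f (g u) u)
    (hhess : ∀ u, HasFDerivAt g (Matrix.toEuclideanCLM (𝕜 := ℝ) (hessM u)) u)
    (hLip : ∀ u v, ‖Matrix.toEuclideanCLM (𝕜 := ℝ) (hessM u) -
      Matrix.toEuclideanCLM (𝕜 := ℝ) (hessM v)‖ ≤ L * ‖u - v‖)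
    (x : EuclideanSpace ℝ (Fin n)) (hHinv : IsUnit (hessM x))
    (y : Fin p → EuclideanSpace ℝ (Fin n))
    (z : Fin p → EuclideanSpace ℝ (Fin n)) (hz : ∀ ℓ, z ℓ = (hessM x).mulVec (y ℓ - x))
    (Δy : ℝ) (hΔy : IsGreatest (Set.range fun ℓ => ‖y ℓ - x‖) Δy) (hΔypos : 0 < Δy)
    (My : Matrix (Fin p) (Fin n) ℝ) (hMy : ∀ ℓ i, My ℓ i = (1 / Δy) * (y ℓ - x) i)
    (hGram : IsUnit (hessM x * Myᵀ * My * hessM x))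
    (Ry : Matrix (Fin n) (Fin p) ℝ)
    (hRy : Ry = (hessM x * Myᵀ * My * hessM x)⁻¹ * (hessM x * Myᵀ))
    (dN : EuclideanSpace ℝ (Fin n))
    (hdN : ∀ ℓ : Fin p, ⟪z ℓ, dN⟫ = -f (y ℓ) + f x + (1 / 2) * ⟪y ℓ - x, z ℓ⟫) :
    ‖(WithLp.equiv 2 (Fin n → ℝ)).symm (-(hessM x)⁻¹.mulVec (g x)) - dN‖ ≤
      ‖Ry‖ * Real.sqrt p * (L / 6) * Δy ^ 2 := by
  set H := hessM x
  set e := (WithLp.equiv 2 (Fin n → ℝ)).symm (-H⁻¹.mulVec (g x)) - dN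
  have hHz : ∀ ℓ, Matrix.toEuclideanCLM (𝕜 := ℝ) H (y ℓ - x) = z ℓ := fun ℓ => by
    ext i
    simp [hz, Matrix.mulVec_sub]
  have hL : 0 ≤ L := by
    obtain ⟨ℓ, hℓ : ‖y ℓ - x‖ = Δy⟩ := hΔy.1
    have := (norm_nonneg _).trans (hLip (y ℓ) x)
    rw [hℓ] at this
    exact nonneg_of_mul_nonneg_left this hΔypos
  have hRyH : Ry * (My * H) = 1 := by
    rw [hRy, Matrix.mul_assoc, ← Matrix.mul_assoc (H * Myᵀ)]
    exact Matrix.nonsing_inv_mul _ ((Matrix.isUnit_iff_isUnit_det _).mp hGram)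
  have hcoord : ∀ ℓ, ‖((My * H) *ᵥ e) ℓ‖ ≤ L / 6 * Δy ^ 2 := by
    intro ℓ
    have hinterp := hdN ℓ
    rw [← hHz] at hinterp
    rw [Matrix.mul_mulVec_apply_eq_inner (s := fun ℓ => y ℓ - x) hMy,
      inner_hessian_comm hg (hhess x), norm_mul, norm_div, norm_one,
      Real.norm_of_nonneg hΔypos.le, Real.norm_eq_abs]
    calc 1 / Δy * |_| ≤ 1 / Δy * (L / 6 * ‖y ℓ - x‖ ^ 3) := by
          gcongr
          exact abs_inner_sub_newton_le hg hhess hLip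
            (Matrix.toEuclideanCLM_neg_inv_mulVec hHinv (g x)) hinterp
      _ ≤ 1 / Δy * (L / 6 * Δy ^ 3) := by
          gcongr
          exact hΔy.2 ⟨ℓ, rfl⟩
      _ = L / 6 * Δy ^ 2 := by field_simp
  calc ‖e‖ ≤ ‖Ry‖ * ‖WithLp.toLp 2 ((My * H) *ᵥ e)‖ :=
        Matrix.norm_le_l2_opNorm_mul_of_mul_eq_one hRyH e
    _ ≤ ‖Ry‖ * (√p * (L / 6 * Δy ^ 2)) := by
        gcongr
        exact (EuclideanSpace.norm_le_sqrt_card_mul (v := WithLp.toLp 2 _) hcoord).trans_eq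
          (by rw [Fintype.card_fin])
    _ = _ := by ring

/-- Corollary 3.1 of the paper with explicit constants: error bound for the recovered Newton
direction in terms of `‖R_y‖` and `Δ_y²`. -/
theorem newton_direction_recovery_error_bound_Ry
    {n p : ℕ} (hpn : p ≥ n)
    (f : EuclideanSpace ℝ (Fin n) → ℝ)
    (g : EuclideanSpace ℝ (Fin n) → EuclideanSpace ℝ (Fin n))
    (hessM : EuclideanSpace ℝ (Fin n) → Matrix (Fin n) (Fin n) ℝ)
    (L : ℝ)
    (hg : ∀ u, HasGradientAt f (g u) u)
    (hhess : ∀ u, HasFDerivAt g (Matrix.toEuclideanCLM (𝕜 := ℝ) (hessM u)) u)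
    (hLip : ∀ u v, ‖Matrix.toEuclideanCLM (𝕜 := ℝ) (hessM u) -
      Matrix.toEuclideanCLM (𝕜 := ℝ) (hessM v)‖ ≤ L * ‖u - v‖)
    (x : EuclideanSpace ℝ (Fin n)) (hHinv : IsUnit (hessM x))
    (y : Fin p → EuclideanSpace ℝ (Fin n))
    (z : Fin p → EuclideanSpace ℝ (Fin n)) (hz : ∀ ℓ, z ℓ = (hessM x).mulVec (y ℓ - x))
    (Δy : ℝ) (hΔy : IsGreatest (Set.range fun ℓ => ‖y ℓ - x‖) Δy) (hΔypos : 0 < Δy)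
    (My : Matrix (Fin p) (Fin n) ℝ) (hMy : ∀ ℓ i, My ℓ i = (1 / Δy) * (y ℓ - x) i)
    (hGram : IsUnit (hessM x * Myᵀ * My * hessM x))
    (Ry : Matrix (Fin n) (Fin p) ℝ)
    (hRy : Ry = (hessM x * Myᵀ * My * hessM x)⁻¹ * (hessM x * Myᵀ))
    (dN : EuclideanSpace ℝ (Fin n))
    (hdN : ∀ ℓ : Fin p, ⟪z ℓ, dN⟫ = -f (y ℓ) + f x + (1 / 2) * ⟪y ℓ - x, z ℓ⟫) :
    ‖(WithLp.equiv 2 (Fin n → ℝ)).symm (-(hessM x)⁻¹.mulVec (g x)) - dN‖ ≤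
      ‖Ry‖ * Real.sqrt p * (L / 6) * Δy ^ 2 :=
  newton_direction_recovery_error_bound_Ry_general f g hessM L hg hhess hLip x hHinv y z hz Δy hΔy
    hΔypos My hMy hGram Ry hRy dN hdN
end

section
/- Let f : ℝⁿ → ℝ be twice continuously differentiable with Hessian Lipschitz continuous with constant L (in operator norm). Then for all x, x′, y ∈ ℝⁿ, ‖ ∇²f(x)(y − x) − ( ∇²f(x′)(y − x′) + ∇f(x′) − ∇f(x) ) ‖ ≤ (L/2) ( ‖y − x′‖² + ‖y − x‖² ). -/
/-!
Both terms are first-order Taylor remainders of the gradient: the error equals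
`(g y - g x' - H(x')(y - x')) - (g y - g x - H(x)(y - x))`, and each remainder is at most
`L/2 · ‖y - ·‖²`. Indeed, along the segment `t ↦ x + t (y - x)` the remainder has derivative
`(H(x + t (y - x)) - H(x))(y - x)`, of norm at most `L t ‖y - x‖²`, and integrating `t` over
`[0, 1]` produces the factor `1/2`.
-/

open Set

lemma norm_sub_le_half_of_norm_deriv_le_mul {F : Type*} [NormedAddCommGroup F] [NormedSpace ℝ F]
    {φ φ' : ℝ → F} {C : ℝ} (hφ : ∀ t, HasDerivAt φ (φ' t) t)
    (hbound : ∀ t ∈ Ico (0 : ℝ) 1, ‖φ' t‖ ≤ C * t) : ‖φ 1 - φ 0‖ ≤ C / 2 := by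
  have hB : ∀ t : ℝ, HasDerivAt (fun t => C / 2 * t ^ 2) (C * t) t := fun t => by
    refine ((hasDerivAt_pow 2 t).const_mul (C / 2)).congr_deriv ?_
    ring
  have := image_norm_le_of_norm_deriv_right_le_deriv_boundary (f := fun t => φ t - φ 0)
    (fun t _ => ((hφ t).sub_const _).continuousAt.continuousWithinAt)
    (fun t _ => ((hφ t).sub_const _).hasDerivWithinAt) (by simp) hB hbound
    (right_mem_Icc.2 zero_le_one)
  simpa using this

lemma norm_sub_sub_le_of_hasFDerivAt_of_lipschitz {E F : Type*}
    [NormedAddCommGroup E] [NormedSpace ℝ E] [NormedAddCommGroup F] [NormedSpace ℝ F]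
    {g : E → F} {g' : E → E →L[ℝ] F} {L : ℝ} (hg : ∀ u, HasFDerivAt g (g' u) u)
    (hLip : ∀ u v, ‖g' u - g' v‖ ≤ L * ‖u - v‖) (x y : E) :
    ‖g y - g x - g' x (y - x)‖ ≤ L / 2 * ‖y - x‖ ^ 2 := by
  set v := y - x
  have hline : ∀ t : ℝ, HasDerivAt (fun t : ℝ => x + t • v) v t := fun t => by
    simpa using ((hasDerivAt_id t).smul_const v).const_add x
  have hφ : ∀ t : ℝ, HasDerivAt (fun t : ℝ => g (x + t • v) - t • g' x v)
      ((g' (x + t • v) - g' x) v) t := fun t => by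
    rw [sub_apply]
    exact ((hg _).comp_hasDerivAt t (hline t)).sub
      (by simpa using (hasDerivAt_id t).smul_const (g' x v))
  have hbound : ∀ t ∈ Ico (0 : ℝ) 1, ‖(g' (x + t • v) - g' x) v‖ ≤ L * ‖v‖ ^ 2 * t := by
    intro t ht
    calc ‖(g' (x + t • v) - g' x) v‖ ≤ ‖g' (x + t • v) - g' x‖ * ‖v‖ :=
          ContinuousLinearMap.le_opNorm _ _
      _ ≤ L * ‖t • v‖ * ‖v‖ := by
          gcongr
          simpa using hLip (x + t • v) x
      _ = L * ‖v‖ ^ 2 * t := by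
          rw [norm_smul, Real.norm_of_nonneg ht.1]
          ring
  have := norm_sub_le_half_of_norm_deriv_le_mul hφ hbound
  simp only [one_smul, zero_smul, add_zero, sub_zero, add_sub_cancel, v] at this
  rw [sub_right_comm]
  linarith

theorem hvp_correction_error_bound_general
    {n : ℕ}
    (g : EuclideanSpace ℝ (Fin n) → EuclideanSpace ℝ (Fin n))
    (hess : EuclideanSpace ℝ (Fin n) → EuclideanSpace ℝ (Fin n) →L[ℝ] EuclideanSpace ℝ (Fin n))
    (L : ℝ)
    (hhess : ∀ u, HasFDerivAt g (hess u) u)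
    (hLip : ∀ u v, ‖hess u - hess v‖ ≤ L * ‖u - v‖)
    (x x' y : EuclideanSpace ℝ (Fin n)) :
    ‖hess x (y - x) - (hess x' (y - x') + g x' - g x)‖ ≤
      L / 2 * (‖y - x'‖ ^ 2 + ‖y - x‖ ^ 2) := by
  have hx := norm_sub_sub_le_of_hasFDerivAt_of_lipschitz hhess hLip x y
  have hx' := norm_sub_sub_le_of_hasFDerivAt_of_lipschitz hhess hLip x' y
  calc ‖hess x (y - x) - (hess x' (y - x') + g x' - g x)‖
      = ‖(g y - g x' - hess x' (y - x')) - (g y - g x - hess x (y - x))‖ := by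
        congr 1; abel
    _ ≤ ‖g y - g x' - hess x' (y - x')‖ + ‖g y - g x - hess x (y - x)‖ := norm_sub_le _ _
    _ ≤ L / 2 * (‖y - x'‖ ^ 2 + ‖y - x‖ ^ 2) := by linarith

/-- The error bound of Section 3.2 of the paper for reusing Hessian-vector products from a
previous iterate `x′` at a new iterate `x` via the gradient correction
`z′ + ∇f(x′) − ∇f(x)`. -/
theorem hvp_correction_error_bound
    {n : ℕ} (f : EuclideanSpace ℝ (Fin n) → ℝ)
    (g : EuclideanSpace ℝ (Fin n) → EuclideanSpace ℝ (Fin n))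
    (hess : EuclideanSpace ℝ (Fin n) → EuclideanSpace ℝ (Fin n) →L[ℝ] EuclideanSpace ℝ (Fin n))
    (L : ℝ)
    (hg : ∀ u, HasGradientAt f (g u) u)
    (hhess : ∀ u, HasFDerivAt g (hess u) u)
    (hLip : ∀ u v, ‖hess u - hess v‖ ≤ L * ‖u - v‖)
    (x x' y : EuclideanSpace ℝ (Fin n)) :
    ‖hess x (y - x) - (hess x' (y - x') + g x' - g x)‖ ≤
      L / 2 * (‖y - x'‖ ^ 2 + ‖y - x‖ ^ 2) :=
  hvp_correction_error_bound_general g hess L hhess hLip x x' y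
end
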